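/- arXiv:2512.14240 — 4 statements merged into one kernel-verified Lean document; each statement's English description precedes it below -/
import Mathlib

section
/- Let f = (f_1,…,f_N) : ℝ^N → ℝ^N be Lipschitz continuous with Lipschitz constant L > 0 and let χ be a transition function. Define f̄ = (f̄_1,…,f̄_N) by f̄_n(u) = (max(f_n(u),0) − f_n(u))·χ(u_n) + f_n(u). Then f̄ satisfies the mass-control condition: for every choice of positive constants c_1,…,c_N, setting K_0 = Σ_{n=1}^N c_n·max(f_n(0),0) ≥ 0 and K_1 = L·√N·Σ_{n=1}^N c_n, one has Σ_{n=1}^N c_n f̄_n(u) ≤ K_0 + K_1·Σ_{n=1}^N u_n for all u ∈ ℝ^N with u_n ≥ 0 for every n. -/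
/-!
Since `χ ≤ 1`, the modification only lowers the negative part of `f_n`, so
`f̄_n(u) ≤ max(f_n(u), 0)`. The positive part is `1`-Lipschitz, hence
`max(f_n(u), 0) ≤ max(f_n(0), 0) + L‖u‖`, and for `u ≥ 0` the Euclidean norm is bounded by
`Σ u_n`. Summing with the weights `c_n` gives the claim.
-/

open scoped BigOperators ENNReal NNReal

/-- A transition function: smooth, equal to `1` below `ε - δ`, equal to `0` above `ε + δ`,
with strictly negative derivative in between, for some `0 < δ < ε`. -/
def IsTransitionFun (χ : ℝ → ℝ) : Prop :=
  ContDiff ℝ (⊤ : ℕ∞) χ ∧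
  ∃ ε δ : ℝ, 0 < δ ∧ δ < ε ∧
    (∀ x : ℝ, x ≤ ε - δ → χ x = 1) ∧
    (∀ x : ℝ, ε + δ ≤ x → χ x = 0) ∧
    (∀ x : ℝ, ε - δ < x → x < ε + δ → deriv χ x < 0)

open Finset

theorem IsTransitionFun.le_one {χ : ℝ → ℝ} (hχ : IsTransitionFun χ) (x : ℝ) :
    χ x ≤ 1 := by
  obtain ⟨hsmooth, ε, δ, -, -, h1, h0, hderiv⟩ := hχ
  rcases le_or_gt x (ε - δ) with hx | hx
  · exact (h1 x hx).le
  rcases le_or_gt (ε + δ) x with hx' | hx'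
  · simp [h0 x hx']
  have hanti : StrictAntiOn χ (Set.Icc (ε - δ) (ε + δ)) :=
    strictAntiOn_of_deriv_neg (convex_Icc _ _) hsmooth.continuous.continuousOn
      (by simpa only [interior_Icc] using fun y hy => hderiv y hy.1 hy.2)
  rw [← h1 (ε - δ) le_rfl]
  exact (hanti ⟨le_rfl, by linarith⟩ ⟨hx.le, hx'.le⟩ hx).le

namespace EuclideanSpace

variable {𝕜 ι : Type*} [RCLike 𝕜] [Fintype ι]

theorem norm_le_sum_norm (x : EuclideanSpace 𝕜 ι) : ‖x‖ ≤ ∑ i, ‖x i‖ := by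
  rw [EuclideanSpace.norm_eq, Real.sqrt_le_left (by positivity)]
  exact sum_sq_le_sq_sum_of_nonneg fun i _ => norm_nonneg (x i)

theorem norm_le_sqrt_card_mul_sum_norm (x : EuclideanSpace 𝕜 ι) :
    ‖x‖ ≤ √(Fintype.card ι) * ∑ i, ‖x i‖ := by
  rcases isEmpty_or_nonempty ι with hι | hι
  · simp [Subsingleton.elim x 0]
  · refine (norm_le_sum_norm x).trans (le_mul_of_one_le_left (by positivity) ?_)
    exact Real.one_le_sqrt.2 (by exact_mod_cast Fintype.card_pos)

end EuclideanSpace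

/-- Mass control for the modified reaction term
`f̄_n(u) = (max(f_n(u),0) − f_n(u))·χ(u_n) + f_n(u)`: for positive weights `c_n`, with
`K₀ = Σ c_n·max(f_n(0),0)` and `K₁ = L·√N·Σ c_n`, one has
`Σ c_n f̄_n(u) ≤ K₀ + K₁·Σ u_n` for all componentwise nonnegative `u`. -/
theorem modified_reaction_mass_control (N : ℕ)
    (f : EuclideanSpace ℝ (Fin N) → EuclideanSpace ℝ (Fin N))
    (L : ℝ) (hL : 0 < L)
    (hf : ∀ u v : EuclideanSpace ℝ (Fin N), ‖f u - f v‖ ≤ L * ‖u - v‖)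
    (χ : ℝ → ℝ) (hχ : IsTransitionFun χ)
    (fbar : EuclideanSpace ℝ (Fin N) → EuclideanSpace ℝ (Fin N))
    (hfbar : ∀ (u : EuclideanSpace ℝ (Fin N)) (n : Fin N),
      fbar u n = (max (f u n) 0 - f u n) * χ (u n) + f u n)
    (c : Fin N → ℝ) (hc : ∀ n, 0 < c n) :
    ∀ u : EuclideanSpace ℝ (Fin N), (∀ n, 0 ≤ u n) →
      ∑ n, c n * fbar u n ≤
        (∑ n, c n * max (f 0 n) 0) + (L * Real.sqrt N * ∑ n, c n) * ∑ n, u n := by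
  intro u hu
  have hnorm : ‖u‖ ≤ √N * ∑ n, u n := by
    simpa [abs_of_nonneg (hu _)] using EuclideanSpace.norm_le_sqrt_card_mul_sum_norm u
  have hcomponent (n : Fin N) : fbar u n ≤ max (f 0 n) 0 + L * √N * ∑ n, u n :=
    calc fbar u n = (max (f u n) 0 - f u n) * χ (u n) + f u n := hfbar u n
      _ ≤ max (f u n) 0 := by
        linarith [mul_le_of_le_one_right (sub_nonneg.2 (le_max_left (f u n) 0))
          (hχ.le_one (u n))]
      _ ≤ max (f 0 n) 0 + |f u n - f 0 n| := by
        linarith [le_abs_self (max (f u n) 0 - max (f 0 n) 0),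
          abs_max_sub_max_le_abs (f u n) (f 0 n) 0]
      _ ≤ max (f 0 n) 0 + ‖f u - f 0‖ := by
        simpa using PiLp.norm_apply_le (f u - f 0) n
      _ ≤ max (f 0 n) 0 + L * ‖u‖ := by simpa using hf u 0
      _ ≤ max (f 0 n) 0 + L * √N * ∑ n, u n := by
        rw [mul_assoc]; gcongr
  calc ∑ n, c n * fbar u n ≤ ∑ n, c n * (max (f 0 n) 0 + L * √N * ∑ n, u n) :=
        sum_le_sum fun n _ => mul_le_mul_of_nonneg_left (hcomponent n) (hc n).le
    _ = (∑ n, c n * max (f 0 n) 0) + (L * √N * ∑ n, c n) * ∑ n, u n := by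
        simp only [mul_add, sum_add_distrib, ← sum_mul]; ring
end

section
/- Let N ∈ ℕ, let Ω ⊆ [0,∞)^N be measurable with ∂[0,∞)^N ∩ ∂Ω ≠ ∅, fix a norm-induced metric D on ℝ^N, and for ε > 0 set Γ_ε := {x ∈ cl(Ω) : D(x, ∂[0,∞)^N ∩ ∂Ω) < ε}. Let f : Ω → ℝ be continuous, uniformly continuous on Γ_s for some s > 0, and strongly quasipositive (f(x) ≥ 0 for all x ∈ ∂[0,∞)^N ∩ ∂Ω, where f is continuously extended to cl(Ω)). Let (f_n)_n ⊆ C(cl(Ω), ℝ) converge to f uniformly on Ω. Let (ε_n)_n, (δ_n)_n be positive monotone sequences converging to 0 with 0 < δ_n < ε_n, and for each n let χ_n : cl(Ω) → [0,1] be a continuous function equal to 1 on Γ_{ε_n − δ_n} and equal to 0 on cl(Ω) \ Γ_{ε_n + δ_n}. Define f_{n,ε_n,δ_n} := max(f_n, 0)·χ_n + f_n·(1 − χ_n). Then each f_{n,ε_n,δ_n} is continuous on cl(Ω) and strongly quasipositive, and f_{n,ε_n,δ_n} → f uniformly on Ω as n → ∞. -/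
/-!
On `B` the cut-off `χₙ` is `1`, so the modification is `max(fₙ, 0) ≥ 0`. It differs from `fₙ`
only on the layer `Γ_{εₙ+δₙ}` and only where `fₙ < 0`, and there it is a convex combination of
`fₙ` and `0`. Since `f ≥ 0` on `B` and `f` is uniformly continuous near `B`, `f > -η` on thin
layers, so at such points both `fₙ` and `0` are `η`-close to `f`. The metric `ν` enters only
through the equivalence of norms in finite dimension: `ν`-small vectors are norm-small.
-/

open Filter Set Topology

variable {E : Type*}

theorem Seminorm.exists_norm_le_mul [NormedAddCommGroup E] [NormedSpace ℝ E]
    [FiniteDimensional ℝ E] (p : Seminorm ℝ E) (hp : ∀ x, p x = 0 → x = 0) :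
    ∃ C > 0, ∀ x, ‖x‖ ≤ C * p x := by
  rcases subsingleton_or_nontrivial E with hE | hE
  · exact ⟨1, one_pos, fun x => by simp [Subsingleton.elim x 0]⟩
  have hcont : Continuous p := continuousOn_univ.mp (p.convexOn.continuousOn isOpen_univ)
  obtain ⟨w, hw, hmin⟩ := (isCompact_sphere (0 : E) 1).exists_isMinOn
    (NormedSpace.sphere_nonempty.mpr zero_le_one) hcont.continuousOn
  have hw0 : 0 < p w :=
    (apply_nonneg p w).lt_of_ne' fun h => by simp [hp w h] at hw
  refine ⟨(p w)⁻¹, inv_pos.mpr hw0, fun x => ?_⟩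
  rcases eq_or_ne x 0 with rfl | hx
  · simp
  have hxn : 0 < ‖x‖ := norm_pos_iff.mpr hx
  have hpx : p w ≤ ‖x‖⁻¹ * p x := by
    simpa [map_smul_eq_mul, norm_smul, hxn.ne'] using
      hmin (show ‖x‖⁻¹ • x ∈ Metric.sphere (0 : E) 1 by simp [norm_smul, hxn.ne'])
  rw [inv_mul_eq_div, le_div_iff₀ hw0]
  rw [inv_mul_eq_div, le_div_iff₀ hxn] at hpx
  linarith

theorem Seminorm.iInf_apply_sub_eq_zero_of_mem [AddCommGroup E] [Module ℝ E]
    (p : Seminorm ℝ E) {B : Set E} {b : E} (hb : b ∈ B) : ⨅ a : B, p (b - a) = 0 := by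
  have : Nonempty B := ⟨⟨b, hb⟩⟩
  have hbdd : BddBelow (range fun a : B => p (b - a)) :=
    ⟨0, by rintro _ ⟨a, rfl⟩; exact apply_nonneg p _⟩
  exact (ciInf_le_of_le hbdd ⟨b, hb⟩ (by simp)).antisymm
    (le_ciInf fun a => apply_nonneg p _)

theorem eventually_neg_lt_of_iInf_lt [NormedAddCommGroup E] {ν : E → ℝ} {C : ℝ} (hC : 0 ≤ C)
    (hνC : ∀ v, ‖v‖ ≤ C * ν v) {K B : Set E} [Nonempty B] (hBK : B ⊆ K) {f : E → ℝ}
    (hf : UniformContinuousOn f K) (hfB : ∀ a ∈ B, 0 ≤ f a) {r : ℕ → ℝ}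
    (hr : Tendsto r atTop (𝓝 0)) {η : ℝ} (hη : 0 < η) :
    ∀ᶠ n in atTop, ∀ x ∈ K, ⨅ a : B, ν (x - a) < r n → -η < f x := by
  obtain ⟨d, hd, hfd⟩ := Metric.uniformContinuousOn_iff.mp hf η hη
  have hCr : Tendsto (fun n => C * r n) atTop (𝓝 0) := by simpa using hr.const_mul C
  filter_upwards [hCr.eventually_lt_const hd] with n hn x hx hxB
  obtain ⟨a, ha⟩ := exists_lt_of_ciInf_lt hxB
  have hxa : dist x a < d :=
    calc dist x a = ‖x - a‖ := dist_eq_norm x a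
      _ ≤ C * ν (x - a) := hνC _
      _ ≤ C * r n := mul_le_mul_of_nonneg_left ha.le hC
      _ < d := hn
  have hfxa := hfd x hx a (hBK a.2) hxa
  rw [Real.dist_eq, abs_lt] at hfxa
  linarith [hfB a a.2]

section BlendPosPart

/-- The value `a` with its negative part removed to the extent `c`. -/
def blendPosPart (c a : ℝ) : ℝ := max a 0 * c + a * (1 - c)

@[simp] theorem blendPosPart_zero_left (a : ℝ) : blendPosPart 0 a = a := by
  simp [blendPosPart]

@[simp] theorem blendPosPart_one_left (a : ℝ) : blendPosPart 1 a = max a 0 := by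
  simp [blendPosPart]

/-- For `a < 0` the blend is `(1 − c)·a + c·0`, and both `a` and `0` are `η`-close to `t`. -/
theorem abs_blendPosPart_sub_lt {c a t η : ℝ} (hc : c ∈ Icc 0 1) (ha : |a - t| < η)
    (ht : -η < t) : |blendPosPart c a - t| < η := by
  obtain ⟨hc0, hc1⟩ := hc
  rw [abs_lt] at ha ⊢
  rcases le_total 0 a with h | h
  · simp only [blendPosPart, max_eq_left h]
    constructor <;> linarith
  · simp only [blendPosPart, max_eq_right h]
    constructor <;> nlinarith

variable {X : Type*}

theorem ContinuousOn.blendPosPart [TopologicalSpace X] {χ g : X → ℝ} {s : Set X}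
    (hχ : ContinuousOn χ s) (hg : ContinuousOn g s) :
    ContinuousOn (fun x => blendPosPart (χ x) (g x)) s :=
  ((hg.sup continuousOn_const).mul hχ).add (hg.mul (continuousOn_const.sub hχ))

theorem tendstoUniformlyOn_blendPosPart {F : ℕ → X → ℝ} {f : X → ℝ} {χ : ℕ → X → ℝ}
    {S : Set X} {L : ℕ → Set X} (hF : TendstoUniformlyOn F f atTop S)
    (hχ01 : ∀ n, ∀ x ∈ S, χ n x ∈ Icc 0 1) (hχ0 : ∀ n, ∀ x ∈ S, x ∉ L n → χ n x = 0)
    (hf : ∀ η > 0, ∀ᶠ n in atTop, ∀ x ∈ S ∩ L n, -η < f x) :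
    TendstoUniformlyOn (fun n x => blendPosPart (χ n x) (F n x)) f atTop S := by
  rw [Metric.tendstoUniformlyOn_iff] at hF ⊢
  intro η hη
  filter_upwards [hF η hη, hf η hη] with n hFn hfn x hx
  have hFx : |F n x - f x| < η := by simpa [Real.dist_eq, abs_sub_comm] using hFn x hx
  rw [Real.dist_eq, abs_sub_comm]
  by_cases hxL : x ∈ L n
  · exact abs_blendPosPart_sub_lt (hχ01 n x hx) hFx (hfn x ⟨hx, hxL⟩)
  · rwa [hχ0 n x hx hxL, blendPosPart_zero_left]

end BlendPosPart

theorem strongly_quasipositive_uniform_approx_general (N : ℕ)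
    (ν : (Fin N → ℝ) → ℝ)
    (hν0 : ∀ x, ν x = 0 ↔ x = 0)
    (hνsmul : ∀ (a : ℝ) (x), ν (a • x) = |a| * ν x)
    (hνadd : ∀ x y, ν (x + y) ≤ ν x + ν y)
    (Ω : Set (Fin N → ℝ))
    (B : Set (Fin N → ℝ))
    (hB : B = frontier {x : Fin N → ℝ | ∀ i, 0 ≤ x i} ∩ frontier Ω)
    (hBne : B.Nonempty)
    (dB : (Fin N → ℝ) → ℝ) (hdB : ∀ x, dB x = ⨅ a : B, ν (x - (a : Fin N → ℝ)))
    (Γ : ℝ → Set (Fin N → ℝ)) (hΓ : ∀ ε : ℝ, Γ ε = {x ∈ closure Ω | dB x < ε})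
    (f : (Fin N → ℝ) → ℝ)
    (s : ℝ) (hs : 0 < s)
    (hfu : UniformContinuousOn f (Γ s))
    (hfq : ∀ x ∈ B, 0 ≤ f x)
    (F : ℕ → (Fin N → ℝ) → ℝ)
    (hFc : ∀ n, ContinuousOn (F n) (closure Ω))
    (hFconv : TendstoUniformlyOn F f atTop Ω)
    (ε δ : ℕ → ℝ)
    (hpos : ∀ n, 0 < δ n ∧ δ n < ε n)
    (hε0 : Tendsto ε atTop (nhds 0)) (hδ0 : Tendsto δ atTop (nhds 0))
    (χ : ℕ → (Fin N → ℝ) → ℝ)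
    (hχc : ∀ n, ContinuousOn (χ n) (closure Ω))
    (hχ01 : ∀ n, ∀ x ∈ closure Ω, χ n x ∈ Set.Icc (0 : ℝ) 1)
    (hχ1 : ∀ n, ∀ x ∈ Γ (ε n - δ n), χ n x = 1)
    (hχ0 : ∀ n, ∀ x ∈ closure Ω \ Γ (ε n + δ n), χ n x = 0)
    (G : ℕ → (Fin N → ℝ) → ℝ)
    (hG : ∀ n x, G n x = max (F n x) 0 * χ n x + F n x * (1 - χ n x)) :
    (∀ n, ContinuousOn (G n) (closure Ω)) ∧
    (∀ n, ∀ x ∈ B, 0 ≤ G n x) ∧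
    TendstoUniformlyOn G f atTop Ω := by
  obtain rfl : G = fun n x => blendPosPart (χ n x) (F n x) := funext₂ hG
  let p : Seminorm ℝ (Fin N → ℝ) := .of ν hνadd fun a x => by simpa using hνsmul a x
  have : Nonempty B := hBne.to_subtype
  have hdB0 : ∀ b ∈ B, dB b = 0 := fun b hb =>
    (hdB b).trans (p.iInf_apply_sub_eq_zero_of_mem hb)
  have hBcl : B ⊆ closure Ω := hB ▸ fun x hx => frontier_subset_closure hx.2
  refine ⟨fun n => (hχc n).blendPosPart (hFc n), fun n x hx => ?_, ?_⟩
  · have hxΓ : x ∈ Γ (ε n - δ n) := by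
      rw [hΓ]; exact ⟨hBcl hx, by linarith [hdB0 x hx, hpos n]⟩
    simp [hχ1 n x hxΓ]
  obtain ⟨C, hC, hνC⟩ := p.exists_norm_le_mul fun x => (hν0 x).mp
  have hBΓ : B ⊆ Γ s := fun b hb => by rw [hΓ]; exact ⟨hBcl hb, by linarith [hdB0 b hb]⟩
  have hr : Tendsto (fun n => ε n + δ n) atTop (𝓝 0) := by simpa using hε0.add hδ0
  refine tendstoUniformlyOn_blendPosPart hFconv (fun n x hx => hχ01 n x (subset_closure hx))
    (fun n x hx hxL => hχ0 n x ⟨subset_closure hx, hxL⟩) fun η hη => ?_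
  filter_upwards [eventually_neg_lt_of_iInf_lt hC.le hνC hBΓ hfu hfq hr hη,
    hr.eventually_lt_const hs] with n hneg hlt x ⟨_, hxΓ⟩
  rw [hΓ] at hxΓ
  exact hneg x (by rw [hΓ]; exact ⟨hxΓ.1, hxΓ.2.trans hlt⟩) (hdB x ▸ hxΓ.2)

/-- Uniform approximation of strongly quasipositive functions: given a norm-induced metric
`D(x,y) = ν(x − y)` on `ℝ^N`, `B = ∂[0,∞)^N ∩ ∂Ω`, boundary layers
`Γ_ε = {x ∈ cl(Ω) : D(x,B) < ε}`, a strongly quasipositive `f` uniformly continuous near the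
boundary, and uniform approximants `f_n`, the modifications
`f_{n,ε_n,δ_n} = max(f_n,0)·χ_n + f_n·(1 − χ_n)` are continuous, strongly quasipositive and
converge to `f` uniformly on `Ω`. -/
theorem strongly_quasipositive_uniform_approx (N : ℕ)
    (ν : (Fin N → ℝ) → ℝ)
    (hν0 : ∀ x, ν x = 0 ↔ x = 0)
    (hνsmul : ∀ (a : ℝ) (x), ν (a • x) = |a| * ν x)
    (hνadd : ∀ x y, ν (x + y) ≤ ν x + ν y)
    (Ω : Set (Fin N → ℝ)) (hΩmeas : MeasurableSet Ω)
    (hΩpos : Ω ⊆ {x | ∀ i, 0 ≤ x i})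
    (B : Set (Fin N → ℝ))
    (hB : B = frontier {x : Fin N → ℝ | ∀ i, 0 ≤ x i} ∩ frontier Ω)
    (hBne : B.Nonempty)
    (dB : (Fin N → ℝ) → ℝ) (hdB : ∀ x, dB x = ⨅ a : B, ν (x - (a : Fin N → ℝ)))
    (Γ : ℝ → Set (Fin N → ℝ)) (hΓ : ∀ ε : ℝ, Γ ε = {x ∈ closure Ω | dB x < ε})
    (f : (Fin N → ℝ) → ℝ)
    (hfc : ContinuousOn f (closure Ω))
    (s : ℝ) (hs : 0 < s)
    (hfu : UniformContinuousOn f (Γ s))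
    (hfq : ∀ x ∈ B, 0 ≤ f x)
    (F : ℕ → (Fin N → ℝ) → ℝ)
    (hFc : ∀ n, ContinuousOn (F n) (closure Ω))
    (hFconv : TendstoUniformlyOn F f atTop Ω)
    (ε δ : ℕ → ℝ)
    (hpos : ∀ n, 0 < δ n ∧ δ n < ε n)
    (hεmono : Antitone ε) (hδmono : Antitone δ)
    (hε0 : Tendsto ε atTop (nhds 0)) (hδ0 : Tendsto δ atTop (nhds 0))
    (χ : ℕ → (Fin N → ℝ) → ℝ)
    (hχc : ∀ n, ContinuousOn (χ n) (closure Ω))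
    (hχ01 : ∀ n, ∀ x ∈ closure Ω, χ n x ∈ Set.Icc (0 : ℝ) 1)
    (hχ1 : ∀ n, ∀ x ∈ Γ (ε n - δ n), χ n x = 1)
    (hχ0 : ∀ n, ∀ x ∈ closure Ω \ Γ (ε n + δ n), χ n x = 0)
    (G : ℕ → (Fin N → ℝ) → ℝ)
    (hG : ∀ n x, G n x = max (F n x) 0 * χ n x + F n x * (1 - χ n x)) :
    (∀ n, ContinuousOn (G n) (closure Ω)) ∧
    (∀ n, ∀ x ∈ B, 0 ≤ G n x) ∧
    TendstoUniformlyOn G f atTop Ω :=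
  strongly_quasipositive_uniform_approx_general N ν hν0 hνsmul hνadd Ω B hB hBne dB hdB Γ hΓ f s hs
    hfu hfq F hFc hFconv ε δ hpos hε0 hδ0 χ hχc hχ01 hχ1 hχ0 G hG
end

section
/- Let N ∈ ℕ, let Ω ⊆ [0,∞)^N be measurable with ∂[0,∞)^N ∩ ∂Ω ≠ ∅, fix a norm-induced metric D on ℝ^N, and for ε > 0 set Γ_ε := {x ∈ cl(Ω) : D(x, ∂[0,∞)^N ∩ ∂Ω) < ε}. Let 1 ≤ p < ∞ and let f : Ω → ℝ be continuous with ‖f‖_{L^p(Ω)} < ∞; assume f is uniformly bounded on Γ_s for some s > 0 with Lebesgue measure |Γ_s| < ∞, and assume there exists φ : [0,s) → ℝ, right-continuous at 0 with φ(0) = 0, such that |Γ_x| ≤ φ(x) for all 0 ≤ x < s. Assume f is strongly quasipositive, and let (f_n)_n ⊆ C(cl(Ω), ℝ) converge to f in L^p(Ω). Let (ε_n)_n, (δ_n)_n be positive monotone sequences converging to 0 with 0 < δ_n < ε_n, and for each n let χ_n : cl(Ω) → [0,1] be continuous, equal to 1 on Γ_{ε_n − δ_n} and equal to 0 on cl(Ω)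 \ Γ_{ε_n + δ_n}. Define f_{n,ε_n,δ_n} := max(f_n, 0)·χ_n + f_n·(1 − χ_n). Then each f_{n,ε_n,δ_n} is continuous on cl(Ω) and strongly quasipositive, and f_{n,ε_n,δ_n} → f in L^p(Ω) as n → ∞. -/
/-!
Where `χ_n = 1`, in particular on the boundary face `B`, the modification equals `max(f_n, 0)`,
which gives quasipositivity. Elsewhere it differs from `f_n` by `χ_n` times the negative part of
`f_n`, which vanishes off the layer `Γ_{ε_n+δ_n}` and is bounded there by `|f_n - f| + |f|`; hence
`‖f_{n,ε_n,δ_n} - f‖_p ≤ 2 ‖f_n - f‖_p + M |Γ_{ε_n+δ_n}|^{1/p}` with `M` a bound of `|f|` on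
`Γ_s`, and `|Γ_{ε_n+δ_n}| → 0` by the control through `φ`. The layers are measurable because
the distance to `B` for a seminorm on a finite-dimensional space is continuous.
-/

open scoped ENNReal
open MeasureTheory Filter Set Topology

theorem Seminorm.continuous_of_finiteDimensional {E : Type*} [NormedAddCommGroup E]
    [NormedSpace ℝ E] [FiniteDimensional ℝ E] (q : Seminorm ℝ E) : Continuous q :=
  continuousOn_univ.1 (q.convexOn.continuousOn isOpen_univ)

section InfDist

variable {E F : Type*} [AddGroup E] [FunLike F E ℝ] [AddGroupSeminormClass F E ℝ] (q : F)
  {B : Set E}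

theorem bddBelow_range_map_sub (x : E) : BddBelow (range fun a : B => q (x - a)) :=
  ⟨0, by rintro _ ⟨a, rfl⟩; exact apply_nonneg q _⟩

theorem iInf_map_sub_le_add [Nonempty B] (x y : E) :
    ⨅ a : B, q (x - a) ≤ q (x - y) + ⨅ a : B, q (y - a) := by
  rw [← sub_le_iff_le_add']
  refine le_ciInf fun a => sub_le_iff_le_add'.2 ?_
  calc ⨅ b : B, q (x - b) ≤ q (x - a) := ciInf_le (bddBelow_range_map_sub q x) a
    _ ≤ q (x - y) + q (y - a) := by simpa using map_add_le_add q (x - y) (y - a)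

theorem continuous_iInf_map_sub [Nonempty B] [TopologicalSpace E] [IsTopologicalAddGroup E]
    (hq : Continuous q) : Continuous fun x => ⨅ a : B, q (x - a) := by
  refine continuous_iff_continuousAt.2 fun x₀ => tendsto_iff_norm_sub_tendsto_zero.2 ?_
  have hlim : Tendsto (fun x => q (x - x₀)) (𝓝 x₀) (𝓝 0) :=
    map_zero q ▸ (hq.tendsto 0).comp (tendsto_sub_nhds_zero_iff.2 tendsto_id)
  refine squeeze_zero (fun _ => norm_nonneg _) (fun x => ?_) hlim
  rw [Real.norm_eq_abs, abs_sub_le_iff]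
  exact ⟨by linarith [iInf_map_sub_le_add q (B := B) x x₀],
    by linarith [iInf_map_sub_le_add q (B := B) x₀ x, map_sub_rev q x₀ x]⟩

theorem iInf_map_sub_eq_zero_of_mem {x : E} (hx : x ∈ B) : ⨅ a : B, q (x - a) = 0 :=
  have : Nonempty B := ⟨⟨x, hx⟩⟩
  le_antisymm ((ciInf_le (bddBelow_range_map_sub q x) ⟨x, hx⟩).trans (by simp))
    (le_ciInf fun _ => apply_nonneg q _)

end InfDist

theorem Seminorm.measurableSet_sep_iInf_sub_lt {E : Type*} [NormedAddCommGroup E]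
    [NormedSpace ℝ E] [FiniteDimensional ℝ E] [MeasurableSpace E] [BorelSpace E]
    (q : Seminorm ℝ E) {B C : Set E} [Nonempty B] (hC : IsClosed C) (t : ℝ) :
    MeasurableSet {x ∈ C | ⨅ a : B, q (x - a) < t} :=
  hC.measurableSet.inter (measurableSet_lt
    (continuous_iInf_map_sub q q.continuous_of_finiteDimensional).measurable measurable_const)

theorem tendsto_measure_nhdsWithin_zero_of_toReal_le {α : Type*} [MeasurableSpace α]
    {μ : Measure α} {Γ : ℝ → Set α} {φ : ℝ → ℝ} {s : ℝ} (hs : 0 < s) (hΓ : Monotone Γ)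
    (hΓs : μ (Γ s) < ⊤) (hφ0 : φ 0 = 0) (hφ : ContinuousWithinAt φ (Ici 0) 0)
    (hle : ∀ x, 0 ≤ x → x < s → (μ (Γ x)).toReal ≤ φ x) :
    Tendsto (fun x => μ (Γ x)) (𝓝[≥] 0) (𝓝 0) := by
  have hsmall : ∀ᶠ x in 𝓝[≥] (0 : ℝ), 0 ≤ x ∧ x < s :=
    Eventually.and self_mem_nhdsWithin (nhdsWithin_le_nhds (eventually_lt_nhds hs))
  have hφlim : Tendsto φ (𝓝[≥] 0) (𝓝 0) := by simpa only [hφ0] using hφ.tendsto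
  have hreal : Tendsto (fun x => (μ (Γ x)).toReal) (𝓝[≥] 0) (𝓝 0) :=
    tendsto_of_tendsto_of_tendsto_of_le_of_le' tendsto_const_nhds hφlim
      (Eventually.of_forall fun _ => ENNReal.toReal_nonneg)
      (hsmall.mono fun x hx => hle x hx.1 hx.2)
  refine (ENNReal.ofReal_zero ▸ ENNReal.tendsto_ofReal hreal).congr' (hsmall.mono fun x hx => ?_)
  exact ENNReal.ofReal_toReal ((measure_mono (hΓ hx.2.le)).trans_lt hΓs).ne

section PosPartBlend

variable {α : Type*}

def posPartBlend (g χ : α → ℝ) (x : α) : ℝ :=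
  max (g x) 0 * χ x + g x * (1 - χ x)

variable {g χ : α → ℝ} {x : α}

theorem posPartBlend_nonneg_of_eq_one (h : χ x = 1) : 0 ≤ posPartBlend g χ x := by
  simp [posPartBlend, h]

theorem ContinuousOn.posPartBlend [TopologicalSpace α] {s : Set α} (hg : ContinuousOn g s)
    (hχ : ContinuousOn χ s) : ContinuousOn (posPartBlend g χ) s :=
  ((hg.sup continuousOn_const).mul hχ).add (hg.mul (continuousOn_const.sub hχ))

theorem abs_posPartBlend_sub_le (hχ : χ x ∈ Icc 0 1) (f : α → ℝ) :
    |posPartBlend g χ x - f x| ≤ 2 * |g x - f x| + χ x * |f x| := by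
  have hsplit : posPartBlend g χ x - f x = (g x - f x) + (max (g x) 0 - g x) * χ x := by
    unfold posPartBlend; ring
  have hneg : 0 ≤ max (g x) 0 - g x ∧ max (g x) 0 - g x ≤ |g x - f x| + |f x| := by
    refine ⟨sub_nonneg.2 (le_max_left _ _), ?_⟩
    have := abs_sub_abs_le_abs_sub (g x) (f x)
    rcases le_total (g x) 0 with h | h
    · rw [max_eq_right h]; linarith [abs_of_nonpos h]
    · rw [max_eq_left h, sub_self]; positivity
  rw [hsplit]
  calc |(g x - f x) + (max (g x) 0 - g x) * χ x|
      ≤ |g x - f x| + (max (g x) 0 - g x) * χ x := by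
        grw [abs_add_le, abs_of_nonneg (mul_nonneg hneg.1 hχ.1)]
    _ ≤ |g x - f x| + (|g x - f x| + |f x|) * χ x := by gcongr; exacts [hχ.1, hneg.2]
    _ ≤ 2 * |g x - f x| + χ x * |f x| := by nlinarith [abs_nonneg (g x - f x), hχ.2]

end PosPartBlend

section Lp

variable {α E F : Type*} [MeasurableSpace α] {μ : Measure α} {p : ℝ≥0∞}
  [NormedAddCommGroup E] [NormedAddCommGroup F]

theorem eLpNorm_le_two_mul_add_indicator {u : α → E} {v : α → F} {S : Set α} {M : ℝ}
    (hp : 1 ≤ p) (hv : AEStronglyMeasurable v μ) (hS : MeasurableSet S)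
    (h : ∀ᵐ x ∂μ, ‖u x‖ ≤ 2 * ‖v x‖ + S.indicator (fun _ => M) x) :
    eLpNorm u p μ ≤ 2 * eLpNorm v p μ + ‖M‖ₑ * μ S ^ (1 / p.toReal) :=
  calc eLpNorm u p μ ≤ eLpNorm ((2 : ℝ) • (fun x => ‖v x‖) + S.indicator fun _ => M) p μ :=
        eLpNorm_mono_ae_real (h.mono fun x hx => by simpa using hx)
    _ ≤ eLpNorm ((2 : ℝ) • fun x => ‖v x‖) p μ + eLpNorm (S.indicator fun _ => M) p μ :=
        eLpNorm_add_le (hv.norm.const_smul 2) (aestronglyMeasurable_const.indicator hS) hp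
    _ ≤ 2 * eLpNorm v p μ + ‖M‖ₑ * μ S ^ (1 / p.toReal) := by
        have htwo : ‖(2 : ℝ)‖ₑ = 2 := by rw [Real.enorm_eq_ofReal_abs]; norm_num
        rw [eLpNorm_const_smul, eLpNorm_norm, htwo]
        gcongr
        exact eLpNorm_indicator_const_le M p

theorem tendsto_eLpNorm_posPartBlend_sub {f : α → ℝ} {F χ : ℕ → α → ℝ} {S : ℕ → Set α}
    {M : ℝ} (hp1 : 1 ≤ p) (hp : p ≠ ⊤) (hFf : ∀ n, AEStronglyMeasurable (F n - f) μ)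
    (hF : Tendsto (fun n => eLpNorm (F n - f) p μ) atTop (𝓝 0))
    (hS : ∀ n, MeasurableSet (S n)) (hSμ : Tendsto (fun n => μ (S n)) atTop (𝓝 0))
    (hχ : ∀ n, ∀ᵐ x ∂μ, χ n x ∈ Icc 0 1) (hχS : ∀ n, ∀ᵐ x ∂μ, x ∉ S n → χ n x = 0)
    (hfS : ∀ᶠ n in atTop, ∀ᵐ x ∂μ, x ∈ S n → |f x| ≤ M) :
    Tendsto (fun n => eLpNorm (posPartBlend (F n) (χ n) - f) p μ) atTop (𝓝 0) := by
  have hbound : ∀ᶠ n in atTop, eLpNorm (posPartBlend (F n) (χ n) - f) p μ ≤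
      2 * eLpNorm (F n - f) p μ + ‖M‖ₑ * μ (S n) ^ (1 / p.toReal) := by
    filter_upwards [hfS] with n hn
    refine eLpNorm_le_two_mul_add_indicator hp1 (hFf n) (hS n) ?_
    filter_upwards [hχ n, hχS n, hn] with x hχx hχSx hfx
    have hlayer : χ n x * |f x| ≤ (S n).indicator (fun _ => M) x := by
      by_cases hx : x ∈ S n
      · rw [indicator_of_mem hx]
        nlinarith [hfx hx, abs_nonneg (f x), hχx.1, hχx.2]
      · simp [hx, hχSx hx]
    simpa using (abs_posPartBlend_sub_le hχx f).trans (by gcongr)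
  have hlim : Tendsto (fun n => 2 * eLpNorm (F n - f) p μ + ‖M‖ₑ * μ (S n) ^ (1 / p.toReal))
      atTop (𝓝 0) := by
    have hr : 0 < 1 / p.toReal :=
      one_div_pos.2 (ENNReal.toReal_pos (zero_lt_one.trans_le hp1).ne' hp)
    simpa using (ENNReal.Tendsto.const_mul hF (by simp)).add
      ((ENNReal.tendsto_const_mul_rpow_nhds_zero_of_pos enorm_ne_top hr).comp hSμ)
  exact tendsto_of_tendsto_of_tendsto_of_le_of_le' tendsto_const_nhds hlim
    (Eventually.of_forall fun _ => zero_le) hbound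

end Lp

theorem strongly_quasipositive_Lp_approx_general (N : ℕ)
    (ν : (Fin N → ℝ) → ℝ)
    (hνsmul : ∀ (a : ℝ) (x), ν (a • x) = |a| * ν x)
    (hνadd : ∀ x y, ν (x + y) ≤ ν x + ν y)
    (Ω : Set (Fin N → ℝ)) (hΩmeas : MeasurableSet Ω)
    (B : Set (Fin N → ℝ))
    (hB : B = frontier {x : Fin N → ℝ | ∀ i, 0 ≤ x i} ∩ frontier Ω)
    (hBne : B.Nonempty)
    (dB : (Fin N → ℝ) → ℝ) (hdB : ∀ x, dB x = ⨅ a : B, ν (x - (a : Fin N → ℝ)))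
    (Γ : ℝ → Set (Fin N → ℝ)) (hΓ : ∀ ε : ℝ, Γ ε = {x ∈ closure Ω | dB x < ε})
    (p : ℝ≥0∞) (hp1 : 1 ≤ p) (hptop : p ≠ ⊤)
    (f : (Fin N → ℝ) → ℝ)
    (hfc : ContinuousOn f (closure Ω))
    (s : ℝ) (hs : 0 < s)
    (hfbd : ∃ M : ℝ, ∀ x ∈ Γ s, |f x| ≤ M)
    (hΓsfin : volume (Γ s) < ⊤)
    (φ : ℝ → ℝ) (hφ0 : φ 0 = 0)
    (hφrc : ContinuousWithinAt φ (Set.Ici 0) 0)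
    (hφ : ∀ x : ℝ, 0 ≤ x → x < s → (volume (Γ x)).toReal ≤ φ x)
    (F : ℕ → (Fin N → ℝ) → ℝ)
    (hFc : ∀ n, ContinuousOn (F n) (closure Ω))
    (hFconv : Tendsto (fun n => eLpNorm (fun x => F n x - f x) p (volume.restrict Ω))
      atTop (nhds 0))
    (ε δ : ℕ → ℝ)
    (hpos : ∀ n, 0 < δ n ∧ δ n < ε n)
    (hε0 : Tendsto ε atTop (nhds 0)) (hδ0 : Tendsto δ atTop (nhds 0))
    (χ : ℕ → (Fin N → ℝ) → ℝ)
    (hχc : ∀ n, ContinuousOn (χ n) (closure Ω))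
    (hχ01 : ∀ n, ∀ x ∈ closure Ω, χ n x ∈ Set.Icc (0 : ℝ) 1)
    (hχ1 : ∀ n, ∀ x ∈ Γ (ε n - δ n), χ n x = 1)
    (hχ0 : ∀ n, ∀ x ∈ closure Ω \ Γ (ε n + δ n), χ n x = 0)
    (G : ℕ → (Fin N → ℝ) → ℝ)
    (hG : ∀ n x, G n x = max (F n x) 0 * χ n x + F n x * (1 - χ n x)) :
    (∀ n, ContinuousOn (G n) (closure Ω)) ∧
    (∀ n, ∀ x ∈ B, 0 ≤ G n x) ∧
    Tendsto (fun n => eLpNorm (fun x => G n x - f x) p (volume.restrict Ω))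
      atTop (nhds 0) := by
  have : Nonempty B := hBne.to_subtype
  obtain rfl : G = fun n => posPartBlend (F n) (χ n) := funext fun n => funext (hG n)
  let q : Seminorm ℝ (Fin N → ℝ) := .of ν hνadd fun a x => by simpa using hνsmul a x
  obtain rfl : dB = fun x => ⨅ a : B, q (x - a) := funext hdB
  have hΓmeas (t : ℝ) : MeasurableSet (Γ t) :=
    hΓ t ▸ q.measurableSet_sep_iInf_sub_lt isClosed_closure t
  have hΓmono : Monotone Γ := fun a b hab x hx => by
    rw [hΓ] at hx ⊢; exact ⟨hx.1, hx.2.trans_le hab⟩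
  have hBΓ (n : ℕ) : B ⊆ Γ (ε n - δ n) := fun x hx => by
    rw [hΓ]
    exact ⟨frontier_subset_closure (hB ▸ hx).2,
      (iInf_map_sub_eq_zero_of_mem q hx).trans_lt (by linarith [hpos n])⟩
  refine ⟨fun n => (hFc n).posPartBlend (hχc n),
    fun n x hx => posPartBlend_nonneg_of_eq_one (hχ1 n x (hBΓ n hx)), ?_⟩
  obtain ⟨M, hM⟩ := hfbd
  have ht : Tendsto (fun n => ε n + δ n) atTop (𝓝[≥] 0) :=
    tendsto_nhdsWithin_iff.2 ⟨by simpa using hε0.add hδ0,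
      Eventually.of_forall fun n => mem_Ici.2 (by linarith [hpos n])⟩
  have hvol := (tendsto_measure_nhdsWithin_zero_of_toReal_le hs hΓmono hΓsfin hφ0 hφrc hφ).comp ht
  refine tendsto_eLpNorm_posPartBlend_sub (S := fun n => Γ (ε n + δ n)) (M := M) hp1 hptop
    (fun n => (((hFc n).sub hfc).mono subset_closure).aestronglyMeasurable hΩmeas) hFconv
    (fun n => hΓmeas _)
    (tendsto_of_tendsto_of_tendsto_of_le_of_le tendsto_const_nhds hvol (fun _ => zero_le)
      fun n => Measure.restrict_apply_le _ _)
    (fun n => ae_restrict_of_forall_mem hΩmeas fun x hx => hχ01 n x (subset_closure hx))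
    (fun n => ae_restrict_of_forall_mem hΩmeas fun x hx hxS => hχ0 n x ⟨subset_closure hx, hxS⟩)
    ?_
  filter_upwards [(tendsto_nhdsWithin_iff.1 ht).1.eventually (eventually_lt_nhds hs)] with n hn
  exact Eventually.of_forall fun x hx => hM x (hΓmono hn.le hx)

/-- `L^p` approximation of strongly quasipositive functions: under the boundary-layer
measure control `|Γ_x| ≤ φ(x)` with `φ` right-continuous at `0`, `φ(0) = 0`, uniform
boundedness of `f` near the boundary and `L^p`-approximants `f_n`, the modifications
`f_{n,ε_n,δ_n} = max(f_n,0)·χ_n + f_n·(1 − χ_n)` are continuous, strongly quasipositive and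
converge to `f` in `L^p(Ω)`. -/
theorem strongly_quasipositive_Lp_approx (N : ℕ)
    (ν : (Fin N → ℝ) → ℝ)
    (hν0 : ∀ x, ν x = 0 ↔ x = 0)
    (hνsmul : ∀ (a : ℝ) (x), ν (a • x) = |a| * ν x)
    (hνadd : ∀ x y, ν (x + y) ≤ ν x + ν y)
    (Ω : Set (Fin N → ℝ)) (hΩmeas : MeasurableSet Ω)
    (hΩpos : Ω ⊆ {x | ∀ i, 0 ≤ x i})
    (B : Set (Fin N → ℝ))
    (hB : B = frontier {x : Fin N → ℝ | ∀ i, 0 ≤ x i} ∩ frontier Ω)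
    (hBne : B.Nonempty)
    (dB : (Fin N → ℝ) → ℝ) (hdB : ∀ x, dB x = ⨅ a : B, ν (x - (a : Fin N → ℝ)))
    (Γ : ℝ → Set (Fin N → ℝ)) (hΓ : ∀ ε : ℝ, Γ ε = {x ∈ closure Ω | dB x < ε})
    (p : ℝ≥0∞) (hp1 : 1 ≤ p) (hptop : p ≠ ⊤)
    (f : (Fin N → ℝ) → ℝ)
    (hfc : ContinuousOn f (closure Ω))
    (hfLp : eLpNorm f p (volume.restrict Ω) < ⊤)
    (s : ℝ) (hs : 0 < s)
    (hfbd : ∃ M : ℝ, ∀ x ∈ Γ s, |f x| ≤ M)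
    (hΓsfin : volume (Γ s) < ⊤)
    (φ : ℝ → ℝ) (hφ0 : φ 0 = 0)
    (hφrc : ContinuousWithinAt φ (Set.Ici 0) 0)
    (hφ : ∀ x : ℝ, 0 ≤ x → x < s → (volume (Γ x)).toReal ≤ φ x)
    (hfq : ∀ x ∈ B, 0 ≤ f x)
    (F : ℕ → (Fin N → ℝ) → ℝ)
    (hFc : ∀ n, ContinuousOn (F n) (closure Ω))
    (hFconv : Tendsto (fun n => eLpNorm (fun x => F n x - f x) p (volume.restrict Ω))
      atTop (nhds 0))
    (ε δ : ℕ → ℝ)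
    (hpos : ∀ n, 0 < δ n ∧ δ n < ε n)
    (hεmono : Antitone ε) (hδmono : Antitone δ)
    (hε0 : Tendsto ε atTop (nhds 0)) (hδ0 : Tendsto δ atTop (nhds 0))
    (χ : ℕ → (Fin N → ℝ) → ℝ)
    (hχc : ∀ n, ContinuousOn (χ n) (closure Ω))
    (hχ01 : ∀ n, ∀ x ∈ closure Ω, χ n x ∈ Set.Icc (0 : ℝ) 1)
    (hχ1 : ∀ n, ∀ x ∈ Γ (ε n - δ n), χ n x = 1)
    (hχ0 : ∀ n, ∀ x ∈ closure Ω \ Γ (ε n + δ n), χ n x = 0)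
    (G : ℕ → (Fin N → ℝ) → ℝ)
    (hG : ∀ n x, G n x = max (F n x) 0 * χ n x + F n x * (1 - χ n x)) :
    (∀ n, ContinuousOn (G n) (closure Ω)) ∧
    (∀ n, ∀ x ∈ B, 0 ≤ G n x) ∧
    Tendsto (fun n => eLpNorm (fun x => G n x - f x) p (volume.restrict Ω))
      atTop (nhds 0) :=
  strongly_quasipositive_Lp_approx_general N ν hνsmul hνadd Ω hΩmeas B hB hBne dB hdB Γ hΓ p hp1
    hptop f hfc s hs hfbd hΓsfin φ hφ0 hφrc hφ F hFc hFconv ε δ hpos hε0 hδ0 χ hχc hχ01 hχ1 hχ0 G hG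
end

section
/- Define f : [0,∞) → [0,∞) by f(x) = √x for 0 ≤ x < 1 and f(x) = x² for x ≥ 1. Then for every N ∈ ℕ the set Γ_1 := {x ∈ [0,∞)^N : ∏_{n=1}^N f(x_n) ≤ 1} has finite N-dimensional Lebesgue measure. -/
open scoped BigOperators ENNReal NNReal
open MeasureTheory Set

/-!
On the open orthant the set lies in `{x | 1 ≤ ∏ n, (f (x n))⁻¹}`, a superlevel set of a product
of copies of `1 / f`, and `1 / f` is integrable on `(0, ∞)`: it is `x ^ (-1/2)` near `0` and
`x ^ (-2)` near `∞`. Superlevel sets of integrable functions have finite measure, and the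
coordinate hyperplanes where `f` vanishes are null.
-/

theorem measure_pi_setOf_prod_le_one_lt_top {ι α : Type*} [Fintype ι] [MeasurableSpace α]
    {μ : Measure α} [SigmaFinite μ] {g : α → ℝ} (hg : ∀ᵐ a ∂μ, 0 < g a)
    (hg_inv : Integrable (fun a => (g a)⁻¹) μ) :
    Measure.pi (fun _ : ι => μ) {x | ∏ i, g (x i) ≤ 1} < ∞ := by
  have hpos : ∀ᵐ x ∂Measure.pi (fun _ : ι => μ), ∀ i, 0 < g (x i) :=
    ae_all_iff.2 fun i => (Measure.tendsto_eval_ae_ae (μ := fun _ => μ) (i := i)).eventually hg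
  have hsub : {x | ∏ i, g (x i) ≤ 1} ≤ᵐ[Measure.pi fun _ : ι => μ]
      {x | 1 ≤ ∏ i, (g (x i))⁻¹} := by
    filter_upwards [hpos] with x hx (hle : ∏ i, g (x i) ≤ 1)
    change 1 ≤ ∏ i, (g (x i))⁻¹
    rw [Finset.prod_inv_distrib]
    exact (one_le_inv₀ (Finset.prod_pos fun i _ => hx i)).2 hle
  exact (measure_mono_ae hsub).trans_lt
    ((Integrable.fintype_prod fun _ => hg_inv).measure_ge_lt_top one_pos)

theorem volume_inter_univ_pi_Ici_zero {ι : Type*} [Fintype ι] (T : Set (ι → ℝ)) :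
    volume (T ∩ univ.pi fun _ => Ici 0) =
      Measure.pi (fun _ => volume.restrict (Ioi (0 : ℝ))) T := by
  rw [← Measure.restrict_apply' (MeasurableSet.univ_pi fun _ => measurableSet_Ici), volume_pi,
    Measure.restrict_pi_pi, Measure.restrict_congr_set Ioi_ae_eq_Ici]

theorem integrableOn_Ioi_inv_sqrt_or_sq :
    IntegrableOn (fun x : ℝ => (if x < 1 then √x else x ^ 2)⁻¹) (Ioi 0) := by
  rw [← Ioo_union_Ici_eq_Ioi zero_lt_one]
  refine IntegrableOn.union ?_ ?_
  · refine IntegrableOn.congr_fun (f := fun x : ℝ => x ^ (-(1 / 2) : ℝ)) ?_ (fun x hx => ?_)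
      measurableSet_Ioo
    · exact ((intervalIntegral.intervalIntegrable_rpow' (by norm_num)).1).mono_set
        Ioo_subset_Ioc_self
    · simp only [if_pos hx.2, Real.sqrt_eq_rpow, Real.rpow_neg hx.1.le]
  · refine IntegrableOn.congr_fun (f := fun x : ℝ => x ^ (-2 : ℝ)) ?_ (fun x hx => ?_)
      measurableSet_Ici
    · exact (integrableOn_Ici_iff_integrableOn_Ioi).2
        (integrableOn_Ioi_rpow_of_lt (by norm_num) one_pos)
    · simp only [if_neg (not_lt.2 (mem_Ici.1 hx)), Real.rpow_neg (zero_le_one.trans hx),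
        Real.rpow_two]

/-- With `f(x) = √x` for `0 ≤ x < 1` and `f(x) = x²` for `x ≥ 1`, the set
`Γ₁ = {x ∈ [0,∞)^N : ∏_n f(x_n) ≤ 1}` has finite `N`-dimensional Lebesgue measure. -/
theorem finite_measure_nonlinear_boundary_layer (N : ℕ)
    (f : ℝ → ℝ) (hf : ∀ x : ℝ, f x = if x < 1 then Real.sqrt x else x ^ 2) :
    volume {x : Fin N → ℝ | (∀ n, 0 ≤ x n) ∧ ∏ n, f (x n) ≤ 1} < ⊤ := by
  obtain rfl : f = fun x => if x < 1 then √x else x ^ 2 := funext hf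
  have hpos : ∀ᵐ x ∂volume.restrict (Ioi (0 : ℝ)), 0 < if x < 1 then √x else x ^ 2 := by
    filter_upwards [ae_restrict_mem measurableSet_Ioi] with x (hx : 0 < x)
    split_ifs <;> positivity
  have hset : {x : Fin N → ℝ | (∀ n, 0 ≤ x n) ∧ ∏ n, (if x n < 1 then √(x n) else x n ^ 2) ≤ 1}
      = {x | ∏ n, (if x n < 1 then √(x n) else x n ^ 2) ≤ 1} ∩ univ.pi fun _ => Ici 0 := by
    ext x
    simp only [mem_ofPred_eq, mem_inter_iff, mem_univ_pi, mem_Ici, and_comm]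
  rw [hset, volume_inter_univ_pi_Ici_zero]
  exact measure_pi_setOf_prod_le_one_lt_top hpos integrableOn_Ioi_inv_sqrt_or_sq
end
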